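/- Let R be a commutative ring, let s be a ring automorphism of R with s ∘ s = id, let R^s := { r ∈ R : s(r) = r } be the fixed subring, and suppose δ ∈ R is such that (1, δ) is a basis of R as a module over R^s. Let B := R ⊗_{R^s} R, with (R,R)-bimodule structure r · (a ⊗ b) · r' = (r a) ⊗ (b r'). Then: the multiplication map m : B → R, a ⊗ b ↦ ab, is surjective; setting c := δ ⊗ 1 − 1 ⊗ δ, one has r · c = c · s(r) for every r ∈ R; and the kernel of m is exactly { r · c : r ∈ R }, with r ↦ r · c injective. Consequently there is a short exact sequence of (R,R)-bimodules 0 → Δ_s → B → Δ_e → 0, where Δ_s denotes R with the bimodule structure r · m · r' = r m s(r') and Δ_e denotes R with the standard bimodule structure. -/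

import Mathlib

/-!
Put `c = δ ⊗ 1 - 1 ⊗ δ` in the commutative ring `R ⊗_{R^s} R`. Since `(1, δ)` is a basis of `R`
over `R^s`, its base change `(1 ⊗ 1, 1 ⊗ δ)` is a basis of `R ⊗_{R^s} R` as a left `R`-module, so
every element is uniquely `x ⊗ 1 + y ⊗ δ`. It is killed by multiplication iff `x = -yδ`, i.e. iff
it is `(-y ⊗ 1) c`, and the coordinate of `(r ⊗ 1) c` along `1 ⊗ δ` is `-r`. For the twist,
`δ + s δ` and `δ · s δ` are `s`-invariant, which forces `(δ ⊗ 1 - 1 ⊗ s δ) c = 0`; writing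
`r = a + bδ` with `a, b` invariant gives `r ⊗ 1 - 1 ⊗ s r = b (δ ⊗ 1 - 1 ⊗ s δ)`.
-/

open TensorProduct

/-- The subring of fixed points of a ring automorphism. -/
def fixedSubring {R : Type*} [CommRing R] (s : R ≃+* R) : Subring R :=
  RingHom.eqLocus (s : R →+* R) (RingHom.id R)

/-- Left outer multiplication `u ↦ r · u` on `R ⊗_S R`, for `S` a subring of `R`. -/
noncomputable def actLeft {R : Type*} [CommRing R] (S : Subring R) (r : R) :
    R ⊗[S] R →ₗ[S] R ⊗[S] R :=
  LinearMap.rTensor R (LinearMap.mulLeft S r)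

/-- Right outer multiplication `u ↦ u · r'` on `R ⊗_S R`, for `S` a subring of `R`. -/
noncomputable def actRight {R : Type*} [CommRing R] (S : Subring R) (r' : R) :
    R ⊗[S] R →ₗ[S] R ⊗[S] R :=
  LinearMap.lTensor R (LinearMap.mulRight S r')

open Module Algebra.TensorProduct

section TensorSquare

variable {S R : Type*} [CommRing S] [CommRing R] [Algebra S R]

theorem LinearMap.mul'_surjective : Function.Surjective (LinearMap.mul' S R) :=
  fun r => ⟨r ⊗ₜ 1, by rw [LinearMap.mul'_apply, mul_one]⟩

/-- The coefficients of `X² - (p + q) X + p q` lie in `S`, so in `R ⊗[S] R` it factors as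
`(X - 1 ⊗ p) (X - 1 ⊗ q)` and also vanishes at `p ⊗ 1`. -/
theorem tmul_one_sub_one_tmul_mul_eq_zero {p q : R} (hsum : p + q ∈ (algebraMap S R).range)
    (hprod : p * q ∈ (algebraMap S R).range) :
    (p ⊗ₜ[S] (1 : R) - 1 ⊗ₜ q) * (p ⊗ₜ 1 - 1 ⊗ₜ p) = 0 := by
  obtain ⟨t, ht⟩ := hsum
  obtain ⟨n, hn⟩ := hprod
  have hsum' : (1 : R) ⊗ₜ[S] p + 1 ⊗ₜ q = p ⊗ₜ 1 + q ⊗ₜ 1 := by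
    rw [← tmul_add, ← add_tmul, ← ht, tmul_one_eq_one_tmul]
  have hprod' : (1 : R) ⊗ₜ[S] p * 1 ⊗ₜ q = p ⊗ₜ 1 * q ⊗ₜ 1 := by
    rw [tmul_mul_tmul, tmul_mul_tmul, one_mul]
    exact hn ▸ (tmul_one_eq_one_tmul n).symm
  linear_combination (-(p ⊗ₜ[S] (1 : R))) * hsum' + hprod'

theorem tmul_one_mul_tmul_one_sub_one_tmul (δ r : R) :
    r ⊗ₜ[S] (1 : R) * (δ ⊗ₜ 1 - 1 ⊗ₜ δ) = (r * δ) ⊗ₜ 1 + (-r) ⊗ₜ δ := by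
  rw [mul_sub, tmul_mul_tmul, tmul_mul_tmul, mul_one, one_mul, mul_one, neg_tmul, sub_eq_add_neg]

theorem Module.Basis.eq_smul_one_add_smul {δ : R} (b : Basis (Fin 2) S R) (hb : ⇑b = ![1, δ])
    (r : R) : r = b.repr r 0 • 1 + b.repr r 1 • δ := by
  simpa [Fin.sum_univ_two, hb] using (b.sum_repr r).symm

theorem tmul_one_mul_eq_one_tmul_mul {δ : R} (b : Basis (Fin 2) S R) (hb : ⇑b = ![1, δ])
    (σ : R →ₐ[S] R) (hsum : δ + σ δ ∈ (algebraMap S R).range)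
    (hprod : δ * σ δ ∈ (algebraMap S R).range) (r : R) :
    r ⊗ₜ[S] (1 : R) * (δ ⊗ₜ 1 - 1 ⊗ₜ δ) = 1 ⊗ₜ σ r * (δ ⊗ₜ 1 - 1 ⊗ₜ δ) := by
  obtain ⟨α, β, rfl⟩ : ∃ α β : S, r = α • 1 + β • δ := ⟨_, _, b.eq_smul_one_add_smul hb r⟩
  have hdiff : (α • 1 + β • δ) ⊗ₜ[S] (1 : R) - 1 ⊗ₜ σ (α • 1 + β • δ) =
      β • (δ ⊗ₜ 1 - 1 ⊗ₜ σ δ) := by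
    rw [map_add, map_smul, map_smul, map_one σ, add_tmul, tmul_add, ← smul_tmul', ← smul_tmul',
      tmul_smul, tmul_smul]
    module
  rw [← sub_eq_zero, ← sub_mul, hdiff, smul_mul_assoc,
    tmul_one_sub_one_tmul_mul_eq_zero hsum hprod, smul_zero]

theorem exists_eq_tmul_one_add_tmul {δ : R} (b : Basis (Fin 2) S R) (hb : ⇑b = ![1, δ])
    (u : R ⊗[S] R) : ∃ x y : R, u = x ⊗ₜ 1 + y ⊗ₜ δ := by
  have hu := (Algebra.TensorProduct.basis R b).sum_repr u
  simp only [Fin.sum_univ_two, basis_apply, hb, smul_tmul', smul_eq_mul, mul_one] at hu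
  exact ⟨_, _, hu.symm⟩

theorem eq_zero_of_tmul_one_add_tmul_eq_zero {δ : R} (b : Basis (Fin 2) S R)
    (hb : ⇑b = ![1, δ]) {x y : R} (h : x ⊗ₜ[S] (1 : R) + y ⊗ₜ δ = 0) : x = 0 ∧ y = 0 := by
  have hB : ⇑(Algebra.TensorProduct.basis R b) = ![1 ⊗ₜ 1, 1 ⊗ₜ δ] := by
    ext i; fin_cases i <;> simp [hb]
  have hli := (Algebra.TensorProduct.basis R b).linearIndependent
  rw [hB, LinearIndependent.pair_iff] at hli
  exact hli x y (by simpa only [smul_tmul', smul_eq_mul, mul_one] using h)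

theorem LinearMap.mul'_eq_zero_iff {δ : R} (b : Basis (Fin 2) S R) (hb : ⇑b = ![1, δ]) (u : R ⊗[S] R) :
    LinearMap.mul' S R u = 0 ↔ ∃ r : R, u = r ⊗ₜ 1 * (δ ⊗ₜ 1 - 1 ⊗ₜ δ) := by
  constructor
  · intro hu
    obtain ⟨x, y, rfl⟩ := exists_eq_tmul_one_add_tmul b hb u
    rw [map_add, LinearMap.mul'_apply, LinearMap.mul'_apply, mul_one, add_eq_zero_iff_eq_neg]
      at hu
    exact ⟨-y, by rw [tmul_one_mul_tmul_one_sub_one_tmul, hu, neg_neg, neg_mul]⟩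
  · rintro ⟨r, rfl⟩
    rw [tmul_one_mul_tmul_one_sub_one_tmul, map_add, LinearMap.mul'_apply, LinearMap.mul'_apply]
    ring

theorem tmul_one_mul_injective {δ : R} (b : Basis (Fin 2) S R) (hb : ⇑b = ![1, δ]) :
    Function.Injective fun r : R => r ⊗ₜ[S] (1 : R) * (δ ⊗ₜ 1 - 1 ⊗ₜ δ) := by
  intro r₁ r₂ h
  have h₀ : (r₁ - r₂) ⊗ₜ[S] (1 : R) * (δ ⊗ₜ 1 - 1 ⊗ₜ δ) = 0 := by
    rw [sub_tmul, sub_mul, sub_eq_zero]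
    exact h
  rw [tmul_one_mul_tmul_one_sub_one_tmul] at h₀
  exact sub_eq_zero.mp (neg_eq_zero.mp (eq_zero_of_tmul_one_add_tmul_eq_zero b hb h₀).2)

end TensorSquare

section Subring

variable {R : Type*} [CommRing R] (S : Subring R)

theorem actLeft_apply (r : R) (u : R ⊗[S] R) : actLeft S r u = r ⊗ₜ 1 * u := by
  induction u using TensorProduct.induction_on with
  | zero => rw [map_zero, mul_zero]
  | tmul x y => rw [actLeft, LinearMap.rTensor_tmul, tmul_mul_tmul, one_mul]; rfl
  | add u v hu hv => rw [map_add, hu, hv, mul_add]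

theorem actRight_apply (r : R) (u : R ⊗[S] R) : actRight S r u = 1 ⊗ₜ r * u := by
  induction u using TensorProduct.induction_on with
  | zero => rw [map_zero, mul_zero]
  | tmul x y => rw [actRight, LinearMap.lTensor_tmul, tmul_mul_tmul, one_mul, mul_comm r]; rfl
  | add u v hu hv => rw [map_add, hu, hv, mul_add]

noncomputable def Subring.basisOfExistsUnique (δ : R)
    (h : ∀ r : R, ∃! p : S × S, r = (p.1 : R) + (p.2 : R) * δ) : Basis (Fin 2) S R :=
  Basis.mk (v := ![1, δ])
    (LinearIndependent.pair_iff.2 fun a b hab => by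
      have hab' := (h 0).unique (y₁ := (a, b)) (y₂ := (0, 0))
        (by rw [← hab]; simp only [Subring.smul_def, smul_eq_mul, mul_one]) (by simp)
      simpa only [Prod.ext_iff] using hab')
    (fun r _ => by
      obtain ⟨p, hp, -⟩ := h r
      rw [Matrix.range_cons_cons_empty, Submodule.mem_span_pair]
      exact ⟨p.1, p.2, by simp only [hp, Subring.smul_def, smul_eq_mul, mul_one]⟩)

theorem Subring.coe_basisOfExistsUnique (δ : R)
    (h : ∀ r : R, ∃! p : S × S, r = (p.1 : R) + (p.2 : R) * δ) :
    ⇑(S.basisOfExistsUnique δ h) = ![1, δ] :=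
  Basis.coe_mk _ _

end Subring

section FixedSubring

variable {R : Type*} [CommRing R] (s : R ≃+* R)

def fixedSubringAlgHom : R →ₐ[fixedSubring s] R :=
  { (s : R →+* R) with commutes' := fun a => a.2 }

variable {s}

theorem add_apply_mem_fixedSubring (hinv : ∀ r : R, s (s r) = r) (x : R) :
    x + s x ∈ fixedSubring s := by
  show s (x + s x) = x + s x
  rw [map_add, hinv, add_comm]

theorem mul_apply_mem_fixedSubring (hinv : ∀ r : R, s (s r) = r) (x : R) :
    x * s x ∈ fixedSubring s := by
  show s (x * s x) = x * s x
  rw [map_mul, hinv, mul_comm]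

end FixedSubring

/-- Lemma 2.4 of Bezrukavnikov–Riche, "Hecke action on the principal block", first exact
sequence (`Δ_s ↪ R ⊗_{R^s} R ↠ Δ_e`): if `s` is a ring involution of `R` and `(1, δ)` is a
basis of `R` over the fixed subring `R^s`, then the multiplication map
`m : R ⊗_{R^s} R → R` is surjective; the element `c = δ ⊗ 1 - 1 ⊗ δ` satisfies
`r · c = c · s(r)`; and the kernel of `m` is exactly `{r · c : r ∈ R}`, with `r ↦ r · c`
injective. -/
theorem stmt_6 {R : Type*} [CommRing R] (s : R ≃+* R) (hinv : ∀ r : R, s (s r) = r)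
    (δ : R)
    (hbasis : ∀ r : R, ∃! p : (fixedSubring s) × (fixedSubring s),
      r = (p.1 : R) + (p.2 : R) * δ) :
    Function.Surjective (LinearMap.mul' (fixedSubring s) R) ∧
    (∀ r : R,
      actLeft (fixedSubring s) r
          (δ ⊗ₜ[fixedSubring s] (1 : R) - (1 : R) ⊗ₜ[fixedSubring s] δ) =
        actRight (fixedSubring s) (s r)
          (δ ⊗ₜ[fixedSubring s] (1 : R) - (1 : R) ⊗ₜ[fixedSubring s] δ)) ∧
    (∀ u : R ⊗[fixedSubring s] R,
      LinearMap.mul' (fixedSubring s) R u = 0 ↔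
        ∃ r : R, u = actLeft (fixedSubring s) r
          (δ ⊗ₜ[fixedSubring s] (1 : R) - (1 : R) ⊗ₜ[fixedSubring s] δ)) ∧
    Function.Injective (fun r : R =>
      actLeft (fixedSubring s) r
        (δ ⊗ₜ[fixedSubring s] (1 : R) - (1 : R) ⊗ₜ[fixedSubring s] δ)) := by
  set b := (fixedSubring s).basisOfExistsUnique δ hbasis
  have hb : ⇑b = ![1, δ] := (fixedSubring s).coe_basisOfExistsUnique δ hbasis
  simp only [actLeft_apply, actRight_apply]
  refine ⟨LinearMap.mul'_surjective, fun r => ?_, LinearMap.mul'_eq_zero_iff b hb, tmul_one_mul_injective b hb⟩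
  exact tmul_one_mul_eq_one_tmul_mul b hb (fixedSubringAlgHom s)
    ⟨⟨_, add_apply_mem_fixedSubring hinv δ⟩, rfl⟩ ⟨⟨_, mul_apply_mem_fixedSubring hinv δ⟩, rfl⟩ r
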